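/- arXiv:math/0208044 — 4 statements merged into one kernel-verified Lean document; each statement's English description precedes it below -/
import Mathlib

section
/- Let f be a probability density on ℝ² whose line marginals satisfy f_{r,θ} ≤ N for all r, θ and some finite N. Let X, Y be independent random points with density f. Then E(|X−Y|^{-1}) = ∫₀^π ∫_{-∞}^∞ f_{r,θ}² dr dθ ≤ Nπ; in particular E(|X−Y|^{-1}) is finite. -/
open MeasureTheory Real Set
open scoped ENNReal

noncomputable def pt (a b : ℝ) : EuclideanSpace ℝ (Fin 2) := !₂[a, b]

noncomputable def lineDensity (f : EuclideanSpace ℝ (Fin 2) → ℝ) (r θ : ℝ) : ℝ :=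
  ∫ t : ℝ, f (pt (r * Real.cos θ - t * Real.sin θ) (r * Real.sin θ + t * Real.cos θ))

/-!
Write `g` for the density. Then `E |X - Y|⁻¹ = ∫ g(x) ∫ g(x + z) |z|⁻¹ dz dx`, and in the polar
coordinates `z = u e_θ`, `e_θ = (-sin θ, cos θ)`, `θ ∈ (0, π)`, `u ∈ ℝ`, the weight `|z|⁻¹` cancels
the Jacobian `|u|`. For fixed `θ`, writing `x` in the rotated coordinates `(r, t)` in which
`L(r, θ)` is the line `t ↦ r (cos θ, sin θ) + t e_θ`, the integral `∫ g(x) ∫ g(x + u e_θ) du dx`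
becomes `∫ (∫ g(r, t) dt)² dr = ∫ f_{r,θ}² dr`. Finally `f_{r,θ}² ≤ N f_{r,θ}` and
`∫ f_{r,θ} dr = ∫ g = 1`.
-/

local notation "ℝ²" => EuclideanSpace ℝ (Fin 2)

noncomputable def ptOfProd (p : ℝ × ℝ) : ℝ² := pt p.1 p.2

noncomputable def lineDir (θ : ℝ) : ℝ² := pt (-sin θ) (cos θ)

noncomputable def lineCoord (θ : ℝ) (p : ℝ × ℝ) : ℝ² :=
  pt (p.1 * cos θ - p.2 * sin θ) (p.1 * sin θ + p.2 * cos θ)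

lemma lineDensity_eq_integral (f : ℝ² → ℝ) (r θ : ℝ) :
    lineDensity f r θ = ∫ t, f (lineCoord θ (r, t)) := rfl

lemma pt_add (a b c d : ℝ) : pt a b + pt c d = pt (a + c) (b + d) := by
  ext i; fin_cases i <;> simp [pt]

lemma smul_pt (u a b : ℝ) : u • pt a b = pt (u * a) (u * b) := by
  ext i; fin_cases i <;> simp [pt]

lemma norm_pt (a b : ℝ) : ‖pt a b‖ = √(a ^ 2 + b ^ 2) := by
  simp [EuclideanSpace.norm_eq, pt, Fin.sum_univ_two, sq_abs]

lemma measurePreserving_ptOfProd : MeasurePreserving ptOfProd := by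
  have h : ptOfProd = WithLp.toLp 2 ∘ (MeasurableEquiv.finTwoArrow (α := ℝ)).symm := by
    funext p; ext i; fin_cases i <;> rfl
  exact h ▸ (PiLp.volume_preserving_toLp (Fin 2)).comp (volume_preserving_finTwoArrow ℝ).symm

@[fun_prop]
lemma measurable_ptOfProd : Measurable ptOfProd := measurePreserving_ptOfProd.measurable

lemma measurePreserving_rotation (θ : ℝ) :
    MeasurePreserving (fun p : ℝ × ℝ => (p.1 * cos θ - p.2 * sin θ, p.1 * sin θ + p.2 * cos θ)) := by
  set L : ℝ × ℝ →ₗ[ℝ] ℝ × ℝ :=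
    Matrix.toLin (Module.Basis.finTwoProd ℝ) (Module.Basis.finTwoProd ℝ)
      !![cos θ, -sin θ; sin θ, cos θ]
  have hdet : LinearMap.det L = 1 := by
    rw [LinearMap.det_toLin, Matrix.det_fin_two_of]
    nlinarith [sin_sq_add_cos_sq θ]
  have hL : MeasurePreserving L := by
    refine ⟨L.continuous_of_finiteDimensional.measurable, ?_⟩
    rw [Measure.map_linearMap_addHaar_eq_smul_addHaar volume (by simp [hdet])]
    simp [hdet]
  convert hL using 1
  ext p <;> simp [L, Matrix.toLin_finTwoProd_apply] <;> ring

lemma measurePreserving_lineCoord (θ : ℝ) : MeasurePreserving (lineCoord θ) :=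
  measurePreserving_ptOfProd.comp (measurePreserving_rotation θ)

@[fun_prop]
lemma measurable_lineCoord (θ : ℝ) : Measurable (lineCoord θ) :=
  (measurePreserving_lineCoord θ).measurable

@[fun_prop]
lemma measurable_lineDir : Measurable lineDir :=
  measurable_ptOfProd.comp (f := fun θ => (-sin θ, cos θ)) (by fun_prop)

lemma lineCoord_add_smul (θ r t u : ℝ) :
    lineCoord θ (r, t + u) = lineCoord θ (r, t) + u • lineDir θ := by
  simp only [lineCoord, lineDir, smul_pt, pt_add]
  congr 1 <;> ring

noncomputable def polarLine (q : ℝ × ℝ) : ℝ × ℝ := (-(q.2 * sin q.1), q.2 * cos q.1)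

lemma ptOfProd_polarLine (θ u : ℝ) : ptOfProd (polarLine (θ, u)) = u • lineDir θ := by
  simp [ptOfProd, polarLine, lineDir, smul_pt]

lemma norm_ptOfProd_polarLine (q : ℝ × ℝ) : ‖ptOfProd (polarLine q)‖ = |q.2| := by
  rw [ptOfProd, norm_pt, ← sqrt_sq_eq_abs]
  congr 1
  simp only [polarLine]
  linear_combination q.2 ^ 2 * sin_sq_add_cos_sq q.1

@[fun_prop]
lemma measurable_polarLine : Measurable polarLine := by
  unfold polarLine; fun_prop

lemma differentiable_polarLine : Differentiable ℝ polarLine := by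
  unfold polarLine; fun_prop

lemma det_fderiv_polarLine (q : ℝ × ℝ) : (fderiv ℝ polarLine q).det = -q.2 := by
  have hB : HasFDerivAt polarLine (LinearMap.toContinuousLinearMap
      (Matrix.toLin (Module.Basis.finTwoProd ℝ) (Module.Basis.finTwoProd ℝ)
        !![-(q.2 * cos q.1), -sin q.1; -(q.2 * sin q.1), cos q.1])) q := by
    rw [Matrix.toLin_finTwoProd_toContinuousLinearMap]
    convert HasFDerivAt.prodMk (𝕜 := ℝ)
      ((hasFDerivAt_snd.mul ((hasDerivAt_sin q.1).comp_hasFDerivAt q hasFDerivAt_fst)).neg)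
      (hasFDerivAt_snd.mul ((hasDerivAt_cos q.1).comp_hasFDerivAt q hasFDerivAt_fst)) using 2 <;>
    (try rfl) <;>
    simp [smul_smul, add_comm, smul_neg, neg_smul _ (ContinuousLinearMap.snd ℝ ℝ ℝ),
      neg_smul _ (ContinuousLinearMap.fst ℝ ℝ ℝ)]
  rw [hB.fderiv, LinearMap.det_toContinuousLinearMap, LinearMap.det_toLin, Matrix.det_fin_two_of]
  linear_combination (-q.2) * sin_sq_add_cos_sq q.1

lemma injOn_polarLine : InjOn polarLine (Ioo 0 π ×ˢ {0}ᶜ) := by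
  rintro ⟨θ, u⟩ ⟨hθ, hu : u ≠ 0⟩ ⟨θ', u'⟩ ⟨hθ', hu' : u' ≠ 0⟩ h
  simp only [polarLine, Prod.mk.injEq, neg_inj] at h
  obtain ⟨hsin, hcos⟩ := h
  -- `u u' sin (θ - θ')` is the determinant of the equal vectors `u e_θ` and `u' e_θ'`
  have hsub : sin (θ - θ') = 0 := by
    have : u * u' * sin (θ - θ') = 0 := by
      rw [sin_sub]; linear_combination u' * cos θ' * hsin - u' * sin θ' * hcos
    exact (mul_eq_zero.1 this).resolve_left (mul_ne_zero hu hu')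
  have hθθ' : θ = θ' := by
    rw [sin_eq_zero_iff_of_lt_of_lt (by linarith [hθ.1, hθ'.2]) (by linarith [hθ.2, hθ'.1])] at hsub
    linarith
  subst hθθ'
  exact Prod.ext rfl (mul_right_cancel₀ (sin_pos_of_pos_of_lt_pi hθ.1 hθ.2).ne' hsin)

lemma image_polarLine : polarLine '' (Ioo 0 π ×ˢ {0}ᶜ) = {p | p.1 ≠ 0} := by
  ext ⟨a, b⟩
  constructor
  · rintro ⟨⟨θ, u⟩, ⟨hθ, hu⟩, h⟩
    simp only [polarLine, Prod.mk.injEq] at h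
    show a ≠ 0
    rw [← h.1, neg_ne_zero]
    exact mul_ne_zero hu (sin_pos_of_pos_of_lt_pi hθ.1 hθ.2).ne'
  · intro (ha : a ≠ 0)
    -- `θ = α + π / 2` with `tan α = b / a`
    set α := arctan (b / a)
    have hcos : 0 < cos α := cos_arctan_pos _
    have hsin : sin α = b / a * cos α := by
      rw [← tan_arctan (b / a), tan_eq_sin_div_cos, div_mul_cancel₀ _ hcos.ne']
    refine ⟨(α + π / 2, -a / cos α), ⟨⟨?_, ?_⟩, ?_⟩, ?_⟩
    · linarith [neg_pi_div_two_lt_arctan (b / a)]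
    · linarith [arctan_lt_pi_div_two (b / a)]
    · simp [ha, hcos.ne']
    · simp only [polarLine, sin_add_pi_div_two, cos_add_pi_div_two, hsin]
      field_simp

lemma volume_fst_eq_zero : volume {p : ℝ × ℝ | p.1 = 0} = 0 := by
  rw [show {p : ℝ × ℝ | p.1 = 0} = {0} ×ˢ univ by ext; simp, Measure.volume_eq_prod,
    Measure.prod_prod]
  simp

theorem lintegral_mul_inv_norm_eq (k : ℝ² → ℝ≥0∞) (hk : Measurable k) :
    ∫⁻ y, k y * ENNReal.ofReal ‖y‖⁻¹ = ∫⁻ θ in Ioo 0 π, ∫⁻ u : ℝ, k (u • lineDir θ) := by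
  set K : ℝ × ℝ → ℝ≥0∞ := fun p => k (ptOfProd p) * ENNReal.ofReal ‖ptOfProd p‖⁻¹
  have hS : MeasurableSet (Ioo 0 π ×ˢ ({0}ᶜ : Set ℝ)) :=
    measurableSet_Ioo.prod (measurableSet_singleton 0).compl
  have himage : polarLine '' (Ioo 0 π ×ˢ {0}ᶜ) =ᵐ[volume] univ := by
    rw [image_polarLine, ae_eq_univ, compl_ofPred]
    simpa using volume_fst_eq_zero
  calc ∫⁻ y, k y * ENNReal.ofReal ‖y‖⁻¹ = ∫⁻ p, K p :=
        (measurePreserving_ptOfProd.lintegral_comp (by fun_prop)).symm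
    _ = ∫⁻ p in polarLine '' (Ioo 0 π ×ˢ {0}ᶜ), K p := by
        rw [Measure.restrict_congr_set himage, Measure.restrict_univ]
    _ = ∫⁻ q in Ioo 0 π ×ˢ {0}ᶜ, ENNReal.ofReal |(fderiv ℝ polarLine q).det| * K (polarLine q) :=
        lintegral_image_eq_lintegral_abs_det_fderiv_mul volume hS
          (fun q _ => (differentiable_polarLine q).hasFDerivAt.hasFDerivWithinAt)
          injOn_polarLine K
    _ = ∫⁻ q in Ioo 0 π ×ˢ {0}ᶜ, k (ptOfProd (polarLine q)) := by
        refine setLIntegral_congr_fun hS fun q ⟨_, (hq : q.2 ≠ 0)⟩ => ?_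
        -- the Jacobian `|u|` cancels the weight `‖u • lineDir θ‖⁻¹ = |u|⁻¹`
        simp only [K, det_fderiv_polarLine, abs_neg, norm_ptOfProd_polarLine]
        rw [mul_left_comm,
          ← ENNReal.ofReal_mul (abs_nonneg _), mul_inv_cancel₀ (abs_ne_zero.2 hq),
          ENNReal.ofReal_one, mul_one]
    _ = ∫⁻ θ in Ioo 0 π, ∫⁻ u : ℝ, k (u • lineDir θ) := by
        rw [Measure.volume_eq_prod, setLIntegral_prod _ (by fun_prop)]
        simp only [ptOfProd_polarLine, restrict_compl_singleton]

section LineIntegrals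

variable {g : ℝ² → ℝ≥0∞}

lemma lintegral_lintegral_lineCoord (hg : Measurable g) (θ : ℝ) :
    ∫⁻ r, ∫⁻ t, g (lineCoord θ (r, t)) = ∫⁻ x, g x := by
  rw [← (measurePreserving_lineCoord θ).lintegral_comp hg, Measure.volume_eq_prod,
    lintegral_prod _ (by fun_prop)]

lemma lintegral_sq_lintegral_lineCoord (hg : Measurable g) (θ : ℝ) :
    ∫⁻ r, (∫⁻ t, g (lineCoord θ (r, t))) ^ 2 = ∫⁻ x, g x * ∫⁻ u : ℝ, g (x + u • lineDir θ) := by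
  have hΦ := measurePreserving_lineCoord θ
  have hF : Measurable fun x => g x * ∫⁻ u : ℝ, g (x + u • lineDir θ) :=
    hg.mul (Measurable.lintegral_prod_right' (f := fun q : ℝ² × ℝ => g (q.1 + q.2 • lineDir θ))
      (by fun_prop))
  have h_translate (r t : ℝ) :
      ∫⁻ s, g (lineCoord θ (r, s)) = ∫⁻ u : ℝ, g (lineCoord θ (r, t) + u • lineDir θ) := by
    simp_rw [← lineCoord_add_smul]
    exact (lintegral_add_left_eq_self (fun s => g (lineCoord θ (r, s))) t).symm
  calc ∫⁻ r, (∫⁻ t, g (lineCoord θ (r, t))) ^ 2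
      = ∫⁻ r, ∫⁻ t, g (lineCoord θ (r, t)) * ∫⁻ u : ℝ, g (lineCoord θ (r, t) + u • lineDir θ) := by
        refine lintegral_congr fun r => ?_
        rw [sq, ← lintegral_mul_const'' _ (by fun_prop)]
        simp_rw [← h_translate r]
    _ = ∫⁻ p, g (lineCoord θ p) * ∫⁻ u : ℝ, g (lineCoord θ p + u • lineDir θ) := by
        rw [Measure.volume_eq_prod]
        exact (lintegral_prod _ (hF.comp hΦ.measurable).aemeasurable).symm
    _ = ∫⁻ x, g x * ∫⁻ u : ℝ, g (x + u • lineDir θ) := hΦ.lintegral_comp hF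

theorem lintegral_mul_lintegral_inv_dist_eq (hg : Measurable g) :
    ∫⁻ x, g x * ∫⁻ y, g y * ENNReal.ofReal ‖x - y‖⁻¹ =
      ∫⁻ θ in Ioo 0 π, ∫⁻ r, (∫⁻ t, g (lineCoord θ (r, t))) ^ 2 := by
  simp_rw [lintegral_sq_lintegral_lineCoord hg]
  have hmeas : Measurable fun q : ℝ × ℝ² => g q.2 * ∫⁻ u : ℝ, g (q.2 + u • lineDir q.1) :=
    (hg.comp measurable_snd).mul (Measurable.lintegral_prod_right'
      (f := fun q : (ℝ × ℝ²) × ℝ => g (q.1.2 + q.2 • lineDir q.1.1)) (by fun_prop))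
  rw [lintegral_lintegral_swap hmeas.aemeasurable]
  refine lintegral_congr fun x => ?_
  rw [lintegral_const_mul'' _ (by fun_prop),
    ← lintegral_mul_inv_norm_eq (fun z => g (x + z)) (by fun_prop),
    ← lintegral_add_left_eq_self (fun y => g y * ENNReal.ofReal ‖x - y‖⁻¹) x]
  simp

end LineIntegrals

lemma lintegral_prod_withDensity {α : Type*} [MeasurableSpace α] {μ : Measure α} [SFinite μ]
    {g : α → ℝ≥0∞} (hg : Measurable g) {w : α × α → ℝ≥0∞} (hw : Measurable w) :
    ∫⁻ p, w p ∂((μ.withDensity g).prod (μ.withDensity g)) =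
      ∫⁻ x, g x * ∫⁻ y, g y * w (x, y) ∂μ ∂μ := by
  rw [prod_withDensity hg hg, lintegral_withDensity_eq_lintegral_mul _ (by fun_prop) hw,
    lintegral_prod _ (by fun_prop)]
  refine lintegral_congr fun x => ?_
  rw [← lintegral_const_mul'' _ (by fun_prop)]
  simp only [Pi.mul_apply, mul_assoc]

lemma lintegral_sq_le_mul_lintegral {α : Type*} [MeasurableSpace α] {μ : Measure α}
    {F : α → ℝ≥0∞} {c : ℝ≥0∞} (hc : c ≠ ∞) (hF : ∀ᵐ x ∂μ, F x ≤ c) :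
    ∫⁻ x, F x ^ 2 ∂μ ≤ c * ∫⁻ x, F x ∂μ := by
  rw [← lintegral_const_mul' c F hc]
  exact lintegral_mono_ae (hF.mono fun x hx => by rw [sq]; gcongr)

lemma lineDensity_nonneg {f : ℝ² → ℝ} (hf : ∀ x, 0 ≤ f x) (r θ : ℝ) : 0 ≤ lineDensity f r θ :=
  integral_nonneg fun _ => hf _

lemma ofReal_lineDensity {f : ℝ² → ℝ} (hmeas : Measurable f) (hpos : ∀ x, 0 ≤ f x) {r θ : ℝ}
    (hfin : ∫⁻ t, ENNReal.ofReal (f (lineCoord θ (r, t))) ≠ ∞) :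
    ENNReal.ofReal (lineDensity f r θ) = ∫⁻ t, ENNReal.ofReal (f (lineCoord θ (r, t))) := by
  rw [lineDensity_eq_integral, integral_eq_lintegral_of_nonneg_ae (ae_of_all _ fun _ => hpos _)
    (by fun_prop : Measurable fun t => f (lineCoord θ (r, t))).aestronglyMeasurable,
    ENNReal.ofReal_toReal hfin]

/-- if all line marginals of f are bounded by N, then
E(|X−Y|⁻¹) = ∫₀^π ∫ f_{r,θ}² dr dθ ≤ N·π. -/
theorem stmt5 (f : EuclideanSpace ℝ (Fin 2) → ℝ)
    (hmeas : Measurable f) (hpos : ∀ x, 0 ≤ f x) (hint : ∫ x, f x = 1)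
    (N : ℝ) (hN : ∀ r θ : ℝ, lineDensity f r θ ≤ N)
    (μ : Measure (EuclideanSpace ℝ (Fin 2)))
    (hμ : μ = volume.withDensity fun x => ENNReal.ofReal (f x)) :
    (∫⁻ p, ENNReal.ofReal ‖p.1 - p.2‖⁻¹ ∂(μ.prod μ) =
      ∫⁻ θ in Ioo (0:ℝ) π, ∫⁻ r : ℝ, ENNReal.ofReal ((lineDensity f r θ) ^ 2)) ∧
    ∫⁻ p, ENNReal.ofReal ‖p.1 - p.2‖⁻¹ ∂(μ.prod μ) ≤ ENNReal.ofReal (N * π) := by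
  set g : ℝ² → ℝ≥0∞ := fun x => ENNReal.ofReal (f x)
  have hg : Measurable g := hmeas.ennreal_ofReal
  have hg1 : ∫⁻ x, g x = 1 := by
    rw [← ofReal_integral_eq_lintegral_ofReal (integrable_of_integral_eq_one hint)
      (ae_of_all _ hpos), hint, ENNReal.ofReal_one]
  set L : ℝ → ℝ → ℝ≥0∞ := fun θ r => ∫⁻ t, g (lineCoord θ (r, t))
  have hL1 (θ : ℝ) : ∫⁻ r, L θ r = 1 := (lintegral_lintegral_lineCoord hg θ).trans hg1
  have hL (θ : ℝ) : ∀ᵐ r, ENNReal.ofReal (lineDensity f r θ) = L θ r :=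
    (ae_lt_top (by fun_prop) (by rw [hL1]; exact ENNReal.one_ne_top)).mono
      fun r hr => ofReal_lineDensity hmeas hpos hr.ne
  have hsq (θ : ℝ) : ∫⁻ r, ENNReal.ofReal (lineDensity f r θ ^ 2) = ∫⁻ r, L θ r ^ 2 :=
    lintegral_congr_ae <| (hL θ).mono fun r hr => by
      dsimp only
      rw [ENNReal.ofReal_pow (lineDensity_nonneg hpos r θ), hr]
  have hEnergy : ∫⁻ p, ENNReal.ofReal ‖p.1 - p.2‖⁻¹ ∂(μ.prod μ) =
      ∫⁻ θ in Ioo 0 π, ∫⁻ r, L θ r ^ 2 := by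
    rw [hμ, lintegral_prod_withDensity hg (by fun_prop), lintegral_mul_lintegral_inv_dist_eq hg]
  refine ⟨by simp_rw [hEnergy, hsq], ?_⟩
  have hN0 : 0 ≤ N := (lineDensity_nonneg hpos 0 0).trans (hN 0 0)
  calc ∫⁻ p, ENNReal.ofReal ‖p.1 - p.2‖⁻¹ ∂(μ.prod μ)
        = ∫⁻ θ in Ioo 0 π, ∫⁻ r, L θ r ^ 2 := hEnergy
    _ ≤ ∫⁻ _ in Ioo 0 π, ENNReal.ofReal N := lintegral_mono fun θ =>
        (lintegral_sq_le_mul_lintegral ENNReal.ofReal_ne_top ((hL θ).mono fun r hr =>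
          hr ▸ ENNReal.ofReal_le_ofReal (hN r θ))).trans_eq (by rw [hL1, mul_one])
    _ = ENNReal.ofReal (N * π) := by
        rw [setLIntegral_const, volume_Ioo, sub_zero, ENNReal.ofReal_mul hN0]
end

section
/- Let μ be the standard bivariate normal distribution on ℝ² (density f(x) = (1/(2π)) e^{-|x|²/2}). Then the line marginal f_{r,θ} equals (1/√(2π)) e^{-r²/2} for all θ, and κ(μ) = (2/3) ∫₀^π ∫_{-∞}^∞ f_{r,θ}³ dr dθ = 1/(3√3). -/
/-! The line at signed distance `r` in direction `θ` is parametrized by arc length `t`, so a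
point on it has squared norm `r² + t²` whatever `θ` is; for the Gaussian the integrand then
factors as `e^{-r²/2} e^{-t²/2}`, and the cube of the line density is again a Gaussian,
of variance `1/3`. -/

open MeasureTheory Real Set
open scoped ENNReal

lemma norm_pt_sq (a b : ℝ) : ‖pt a b‖ ^ 2 = a ^ 2 + b ^ 2 := by
  rw [pt, EuclideanSpace.norm_eq, Real.sq_sqrt (by positivity)]
  simp [Fin.sum_univ_two, sq_abs]

lemma norm_pt_rotate_sq (r θ t : ℝ) :
    ‖pt (r * cos θ - t * sin θ) (r * sin θ + t * cos θ)‖ ^ 2 = r ^ 2 + t ^ 2 := by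
  rw [norm_pt_sq]
  linear_combination (r ^ 2 + t ^ 2) * sin_sq_add_cos_sq θ

lemma lineDensity_of_radial (f : EuclideanSpace ℝ (Fin 2) → ℝ) (g : ℝ → ℝ)
    (hf : ∀ x, f x = g (‖x‖ ^ 2)) (r θ : ℝ) :
    lineDensity f r θ = ∫ t : ℝ, g (r ^ 2 + t ^ 2) := by
  simp only [lineDensity, hf, norm_pt_rotate_sq]

lemma integral_exp_neg_mul_sq_div_two (c : ℝ) :
    ∫ t : ℝ, exp (-(c * t ^ 2) / 2) = √(2 * π / c) := by
  have h := integral_gaussian (c / 2)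
  simp_rw [show ∀ t : ℝ, -(c / 2) * t ^ 2 = -(c * t ^ 2) / 2 by intro t; ring] at h
  rw [h, div_div_eq_mul_div, mul_comm π 2]

lemma lineDensity_stdGaussian (f : EuclideanSpace ℝ (Fin 2) → ℝ)
    (hf : ∀ x, f x = (1 / (2 * π)) * exp (-‖x‖ ^ 2 / 2)) (r θ : ℝ) :
    lineDensity f r θ = (1 / √(2 * π)) * exp (-r ^ 2 / 2) := by
  have hfactor : ∀ t : ℝ, (1 / (2 * π)) * exp (-(r ^ 2 + t ^ 2) / 2)
      = (1 / (2 * π)) * exp (-r ^ 2 / 2) * exp (-(1 * t ^ 2) / 2) := by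
    intro t
    rw [mul_assoc, ← exp_add]
    ring_nf
  rw [lineDensity_of_radial f (fun s ↦ (1 / (2 * π)) * exp (-s / 2)) hf r θ]
  simp_rw [hfactor]
  rw [integral_const_mul, integral_exp_neg_mul_sq_div_two, div_one]
  have hs : √(2 * π) ^ 2 = 2 * π := sq_sqrt (by positivity)
  have hs0 : √(2 * π) ≠ 0 := by positivity
  field_simp
  linear_combination hs

lemma integral_stdGaussian_cube :
    ∫ r : ℝ, ((1 / √(2 * π)) * exp (-r ^ 2 / 2)) ^ 3 = 1 / (2 * π * √3) := by
  have hcube : ∀ r : ℝ, ((1 / √(2 * π)) * exp (-r ^ 2 / 2)) ^ 3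
      = (1 / √(2 * π)) ^ 3 * exp (-(3 * r ^ 2) / 2) := by
    intro r
    rw [mul_pow, ← exp_nat_mul]
    push_cast
    ring_nf
  simp_rw [hcube]
  rw [integral_const_mul, integral_exp_neg_mul_sq_div_two, sqrt_div (by positivity)]
  have hs : √(2 * π) ^ 2 = 2 * π := sq_sqrt (by positivity)
  have hs0 : √(2 * π) ≠ 0 := by positivity
  have h3 : √3 ≠ 0 := by positivity
  field_simp
  linear_combination -hs

/-- for the standard bivariate normal density f, every line marginal
is the standard one-dimensional normal density, and κ(μ) = 1/(3√3). -/
theorem stmt10 (f : EuclideanSpace ℝ (Fin 2) → ℝ)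
    (hf : ∀ x, f x = (1 / (2 * π)) * Real.exp (-‖x‖ ^ 2 / 2)) :
    (∀ r θ : ℝ, lineDensity f r θ = (1 / Real.sqrt (2 * π)) * Real.exp (-r ^ 2 / 2)) ∧
    (2/3) * (∫ θ in Ioo (0:ℝ) π, ∫ r : ℝ, (lineDensity f r θ) ^ 3) =
      1 / (3 * Real.sqrt 3) := by
  have hline := lineDensity_stdGaussian f hf
  refine ⟨hline, ?_⟩
  simp_rw [hline, integral_stdGaussian_cube]
  rw [setIntegral_const, volume_real_Ioo_of_le pi_pos.le, sub_zero, smul_eq_mul]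
  field_simp
end

section
/- Let S ⊆ ℝ² be a bounded convex set with nonempty interior and area |S|. For a line L(s,θ) = {x : x·(cos θ, sin θ) = s}, let l(s,θ) be the length (one-dimensional Lebesgue measure) of L(s,θ) ∩ S. Then Crofton's formula holds: ∫₀^π ∫_{-∞}^∞ l(s,θ)³ ds dθ = 3|S|². -/
/-! Identify `ℝ²` with `ℂ` and `S` with `T ⊆ ℂ`. For `w ∈ ℂ` let `g w = |T ∩ (T - w)|`; a shear
of `ℂ × ℂ` shows `∫ g = |T|²`. In polar coordinates `w = i r e^{iθ}`, and since `g` is even the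
angles `θ ∈ (-π, 0)` contribute as much as `θ ∈ (0, π)`. Slicing `ℂ` along the lines `L(s, θ)`, of
direction `i e^{iθ}`, gives `g (i r e^{iθ}) = ∫ |A_s ∩ (A_s - r)| ds` with `A_s` the chord on
`L(s, θ)`, and for an interval `A` of length `l`, `∫_0^∞ r |A ∩ (A - r)| dr = ∫_0^l r (l - r) dr
= l³/6`. Hence `|T|² = 2 ∫_0^π ∫ l³/6 ds dθ`. The frontier of a convex set is null, so replacing
`T` by its closure changes neither `|T|` nor almost every chord length. -/

open MeasureTheory Real Set
open scoped ENNReal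
open Complex (I)

/-- The length of the chord L(s,θ) ∩ S, the line L(s,θ) being parametrized
by t ↦ (s + i t) e^{iθ}. -/
noncomputable def chordLen (S : Set (EuclideanSpace ℝ (Fin 2))) (s θ : ℝ) : ℝ :=
  (volume {t : ℝ |
    pt (s * Real.cos θ - t * Real.sin θ) (s * Real.sin θ + t * Real.cos θ) ∈ S}).toReal

lemma lintegral_Ioi_ofReal_mul_ofReal_sub {L : ℝ} (hL : 0 ≤ L) :
    ∫⁻ r in Ioi 0, ENNReal.ofReal r * ENNReal.ofReal (L - r) = ENNReal.ofReal L ^ 3 / 6 := by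
  have hvanish : ∫⁻ r in Ioi L, ENNReal.ofReal r * ENNReal.ofReal (L - r) = 0 := by
    rw [setLIntegral_congr_fun measurableSet_Ioi fun r (hr : L < r) => by
      rw [ENNReal.ofReal_of_nonpos (sub_nonpos.mpr hr.le), mul_zero]]
    exact lintegral_zero
  have hpoly : ∫ r in Ioc 0 L, r * (L - r) = L ^ 3 / 6 := by
    rw [← intervalIntegral.integral_of_le hL,
      intervalIntegral.integral_congr (g := fun r => L * r - r ^ 2) fun r _ => by ring,
      intervalIntegral.integral_sub (intervalIntegral.intervalIntegrable_id.const_mul L)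
        (intervalIntegral.intervalIntegrable_pow 2), intervalIntegral.integral_const_mul,
      integral_id, integral_pow]
    ring
  rw [← Ioc_union_Ioi_eq_Ioi hL, lintegral_union measurableSet_Ioi Ioc_disjoint_Ioi_same,
    hvanish, add_zero, setLIntegral_congr_fun measurableSet_Ioc fun r (hr : r ∈ Ioc 0 L) => by
      rw [← ENNReal.ofReal_mul hr.1.le], ← ofReal_integral_eq_lintegral_ofReal, hpoly,
    ENNReal.ofReal_div_of_pos (by norm_num), ENNReal.ofReal_pow hL]
  · norm_num
  · exact (continuous_id.mul (continuous_const.sub continuous_id)).integrableOn_Ioc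
  · exact ae_restrict_of_forall_mem measurableSet_Ioc fun r hr =>
      mul_nonneg hr.1.le (sub_nonneg.mpr hr.2)

lemma volume_Icc_inter_preimage_add (a b : ℝ) {r : ℝ} (hr : 0 ≤ r) :
    volume (Icc a b ∩ (· + r) ⁻¹' Icc a b) = ENNReal.ofReal (b - a - r) := by
  rw [preimage_add_const_Icc, Icc_inter_Icc, max_eq_left (by linarith),
    min_eq_right (by linarith), volume_Icc, sub_right_comm]

lemma lintegral_Ioi_mul_volume_inter_preimage_add {A : Set ℝ} (hA : IsCompact A)
    (hconv : Convex ℝ A) :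
    ∫⁻ r in Ioi 0, ENNReal.ofReal r * volume (A ∩ (· + r) ⁻¹' A) = volume A ^ 3 / 6 := by
  rcases A.eq_empty_or_nonempty with rfl | hne
  · simp
  rw [eq_Icc_of_connected_compact ⟨hne, hconv.isPreconnected⟩ hA,
    setLIntegral_congr_fun measurableSet_Ioi fun r hr =>
      by rw [volume_Icc_inter_preimage_add _ _ (le_of_lt hr)], volume_Icc]
  exact lintegral_Ioi_ofReal_mul_ofReal_sub
    (sub_nonneg.mpr (csInf_le_csSup hne hA.bddBelow hA.bddAbove))

section AddGroup

variable {G : Type*} [MeasurableSpace G] [AddGroup G] (μ : Measure G)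

lemma lintegral_measure_inter_preimage_add [MeasurableAdd₂ G] [SFinite μ]
    [μ.IsAddLeftInvariant] {T : Set G} (hT : MeasurableSet T) :
    ∫⁻ w, μ (T ∩ (· + w) ⁻¹' T) ∂μ = μ T ^ 2 := by
  have hshear := measurePreserving_prod_add_swap μ μ
  calc ∫⁻ w, μ (T ∩ (· + w) ⁻¹' T) ∂μ
      = μ.prod μ ((fun p : G × G => (p.2, p.2 + p.1)) ⁻¹' T ×ˢ T) :=
        (Measure.prod_apply (hshear.measurable (hT.prod hT))).symm
    _ = μ T ^ 2 := by
        rw [hshear.measure_preimage (hT.prod hT).nullMeasurableSet, Measure.prod_prod, sq]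

lemma measure_inter_preimage_add_neg [MeasurableAdd G] [μ.IsAddRightInvariant] (T : Set G)
    (w : G) : μ (T ∩ (· + -w) ⁻¹' T) = μ (T ∩ (· + w) ⁻¹' T) := by
  rw [← measure_preimage_add_right μ w]
  congr 1
  ext z
  simp [and_comm]

end AddGroup

noncomputable def lineParam (θ s t : ℝ) : ℂ := (s + t * I) * Complex.exp (θ * I)

def chord (T : Set ℂ) (θ s : ℝ) : Set ℝ := {t | lineParam θ s t ∈ T}

lemma lineParam_add (θ s t r : ℝ) :
    lineParam θ s t + r * (I * Complex.exp (θ * I)) = lineParam θ s (t + r) := by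
  simp only [lineParam]
  push_cast
  ring

lemma isometry_lineParam (θ s : ℝ) : Isometry (lineParam θ s) := by
  refine Isometry.of_dist_eq fun t t' => ?_
  rw [dist_eq_norm, dist_eq_norm, lineParam, lineParam, ← sub_mul, norm_mul,
    Complex.norm_exp_ofReal_mul_I, mul_one, add_sub_add_left_eq_sub, ← sub_mul, norm_mul,
    Complex.norm_I, mul_one, ← Complex.ofReal_sub, Complex.norm_real, Real.norm_eq_abs]

lemma measurePreserving_lineParam (θ : ℝ) :
    MeasurePreserving (fun p : ℝ × ℝ => lineParam θ p.1 p.2) := by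
  convert (rotation (Circle.exp θ)).measurePreserving.comp
    Complex.volume_preserving_equiv_real_prod.symm using 1
  ext1 p
  simp [lineParam, rotation_apply, Complex.mk_eq_add_mul_I, mul_comm]

lemma measurable_volume_chord {T : Set ℂ} (hT : MeasurableSet T) :
    Measurable fun p : ℝ × ℝ => volume (chord T p.1 p.2) := by
  have hcont : Continuous fun q : (ℝ × ℝ) × ℝ => lineParam q.1.1 q.1.2 q.2 := by
    unfold lineParam; fun_prop
  exact measurable_measure_prodMk_left (hcont.measurable hT)

lemma measurable_volume_chord_inter_preimage_add {T : Set ℂ} (hT : MeasurableSet T) (θ : ℝ) :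
    Measurable fun p : ℝ × ℝ => volume (chord T θ p.2 ∩ (· + p.1) ⁻¹' chord T θ p.2) := by
  have hcont : Continuous fun q : (ℝ × ℝ) × ℝ => lineParam θ q.1.2 q.2 := by
    unfold lineParam; fun_prop
  have hcont' : Continuous fun q : (ℝ × ℝ) × ℝ => lineParam θ q.1.2 (q.2 + q.1.1) := by
    unfold lineParam; fun_prop
  exact measurable_measure_prodMk_left ((hcont.measurable hT).inter (hcont'.measurable hT))

lemma volume_inter_preimage_add_eq_lintegral_chord {T : Set ℂ} (hT : MeasurableSet T)
    (θ r : ℝ) :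
    volume (T ∩ (· + r * (I * Complex.exp (θ * I))) ⁻¹' T) =
      ∫⁻ s, volume (chord T θ s ∩ (· + r) ⁻¹' chord T θ s) := by
  have hmeas : MeasurableSet (T ∩ (· + r * (I * Complex.exp (θ * I))) ⁻¹' T) :=
    hT.inter (measurable_add_const _ hT)
  rw [← (measurePreserving_lineParam θ).measure_preimage hmeas.nullMeasurableSet,
    Measure.volume_eq_prod, Measure.prod_apply ((measurePreserving_lineParam θ).measurable hmeas)]
  refine lintegral_congr fun s => ?_
  congr 1
  ext t
  simp [chord, lineParam_add]

lemma ae_chord_ae_eq {X Y : Set ℂ} (h : X =ᵐ[volume] Y) (θ : ℝ) :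
    ∀ᵐ s, chord X θ s =ᵐ[volume] chord Y θ s := by
  have := (measurePreserving_lineParam θ).quasiMeasurePreserving.preimage_ae_eq h
  rw [Measure.volume_eq_prod] at this
  exact Measure.ae_ae_of_ae_prod this

lemma lintegral_eq_two_mul_lintegral_polar_of_even {f : ℂ → ℝ≥0∞} (hf : Measurable f)
    (heven : ∀ z, f (-z) = f z) :
    ∫⁻ z, f z =
      2 * ∫⁻ θ in Ioo 0 π, ∫⁻ r in Ioi 0, ENNReal.ofReal r * f (r * Complex.exp (θ * I)) := by
  set G : ℝ → ℝ≥0∞ := fun θ => ∫⁻ r in Ioi 0, ENNReal.ofReal r * f (r * Complex.exp (θ * I))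
  have hG : ∀ θ, G (θ - π) = G θ := fun θ => by
    simp only [G, Complex.ofReal_sub, sub_mul, Complex.exp_sub, Complex.exp_pi_mul_I, div_neg,
      div_one, mul_neg, heven]
  have hpolar : ∫⁻ z, f z = ∫⁻ θ in Ioo (-π) π, G θ := by
    rw [← Complex.lintegral_comp_polarCoord_symm, polarCoord_target,
      Measure.volume_eq_prod, ← Measure.prod_restrict, lintegral_prod_symm]
    · refine lintegral_congr fun θ => lintegral_congr fun r => ?_
      simp [Complex.exp_mul_I, mul_add]
    · exact (ENNReal.measurable_ofReal.comp measurable_fst).smul (hf.comp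
        (Complex.measurableEquivRealProd.symm.measurable.comp
          continuous_polarCoord_symm.measurable)) |>.aemeasurable
  have hshift : ∫⁻ θ in Ioo (-π) 0, G θ = ∫⁻ θ in Ioo 0 π, G θ := by
    rw [← (measurePreserving_sub_right volume π).setLIntegral_comp_preimage_emb
      (measurableEmbedding_subRight π), preimage_sub_const_Ioo]
    simp [hG]
  rw [hpolar, ← Ioc_union_Ioo_eq_Ioo (neg_nonpos.mpr pi_pos.le) pi_pos,
    lintegral_union measurableSet_Ioo
      (disjoint_left.mpr fun _ h₁ h₂ => h₁.2.not_gt h₂.1), setLIntegral_congr Ioo_ae_eq_Ioc.symm,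
    hshift, two_mul]

lemma convex_chord {T : Set ℂ} (hT : Convex ℝ T) (θ s : ℝ) : Convex ℝ (chord T θ s) := by
  have hline : chord T θ s = AffineMap.lineMap (lineParam θ s 0) (lineParam θ s 1) ⁻¹' T := by
    ext t
    simp only [chord, mem_ofPred_eq, mem_preimage, AffineMap.lineMap_apply, lineParam]
    congr! 1
    simp only [vsub_eq_sub, vadd_eq_add, Complex.real_smul]
    push_cast
    ring
  exact hline ▸ hT.affine_preimage _

lemma isCompact_chord {T : Set ℂ} (hT : IsCompact T) (θ s : ℝ) : IsCompact (chord T θ s) :=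
  (isometry_lineParam θ s).isClosedEmbedding.isCompact_preimage hT

theorem lintegral_lintegral_volume_chord_pow_three {T : Set ℂ} (hT : IsCompact T)
    (hconv : Convex ℝ T) :
    ∫⁻ θ in Ioo 0 π, ∫⁻ s, volume (chord T θ s) ^ 3 = 3 * volume T ^ 2 := by
  have hTm := hT.measurableSet
  set g : ℂ → ℝ≥0∞ := fun w => volume (T ∩ (· + w) ⁻¹' T)
  have hg : Measurable g :=
    measurable_measure_prodMk_left (s := {p : ℂ × ℂ | p.2 ∈ T ∧ p.2 + p.1 ∈ T})
      ((measurable_snd hTm).inter ((measurable_snd.add measurable_fst) hTm))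
  have hrot : ∫⁻ w, g (I * w) = ∫⁻ w, g w := by
    have hI : ((Circle.exp (π / 2) : Circle) : ℂ) = I := by simp [Circle.coe_exp]
    simpa [rotation_apply, hI] using
      (rotation (Circle.exp (π / 2))).measurePreserving.lintegral_comp_emb
        (rotation _).toHomeomorph.measurableEmbedding g
  have hradial : ∀ θ : ℝ,
      ∫⁻ r in Ioi 0, ENNReal.ofReal r * g (I * (r * Complex.exp (θ * I))) =
        6⁻¹ * ∫⁻ s, volume (chord T θ s) ^ 3 := fun θ => calc
    _ = ∫⁻ r in Ioi 0, ∫⁻ s,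
          ENNReal.ofReal r * volume (chord T θ s ∩ (· + r) ⁻¹' chord T θ s) := by
        refine lintegral_congr fun r => ?_
        simp only [g, mul_left_comm I]
        rw [volume_inter_preimage_add_eq_lintegral_chord hTm,
          lintegral_const_mul' _ _ ENNReal.ofReal_ne_top]
    _ = ∫⁻ s, ∫⁻ r in Ioi 0,
          ENNReal.ofReal r * volume (chord T θ s ∩ (· + r) ⁻¹' chord T θ s) :=
        lintegral_lintegral_swap ((ENNReal.measurable_ofReal.comp measurable_fst).mul
          (measurable_volume_chord_inter_preimage_add hTm θ)).aemeasurable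
    _ = ∫⁻ s, 6⁻¹ * volume (chord T θ s) ^ 3 := by
        refine lintegral_congr fun s => ?_
        rw [lintegral_Ioi_mul_volume_inter_preimage_add (isCompact_chord hT θ s)
          (convex_chord hconv θ s), ENNReal.div_eq_inv_mul]
    _ = _ := lintegral_const_mul' _ _ (by simp)
  calc ∫⁻ θ in Ioo 0 π, ∫⁻ s, volume (chord T θ s) ^ 3
      = 3 * (2 * ∫⁻ θ in Ioo 0 π, 6⁻¹ * ∫⁻ s, volume (chord T θ s) ^ 3) := by
        have hsix : (3 : ℝ≥0∞) * 2 * 6⁻¹ = 1 := by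
          rw [show (3 : ℝ≥0∞) * 2 = 6 by norm_num]
          exact ENNReal.mul_inv_cancel (by norm_num) (by simp)
        rw [lintegral_const_mul' _ _ (by simp), ← mul_assoc, ← mul_assoc, hsix, one_mul]
    _ = 3 * ∫⁻ w, g (I * w) := by
        rw [lintegral_eq_two_mul_lintegral_polar_of_even (f := fun w => g (I * w))
          (hg.comp (measurable_const_mul I))
          fun w => by simp only [g, mul_neg, measure_inter_preimage_add_neg]]
        simp_rw [hradial]
    _ = 3 * volume T ^ 2 := by rw [hrot, lintegral_measure_inter_preimage_add volume hTm]

lemma integral_integral_toReal {α β : Type*} [MeasurableSpace α] [MeasurableSpace β]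
    {μ : Measure α} {ν : Measure β} [SFinite ν] {F : α × β → ℝ≥0∞} (hF : Measurable F)
    (hfin : ∀ p, F p ≠ ∞) (htot : ∫⁻ a, ∫⁻ b, F (a, b) ∂ν ∂μ ≠ ∞) :
    ∫ a, ∫ b, (F (a, b)).toReal ∂ν ∂μ = (∫⁻ a, ∫⁻ b, F (a, b) ∂ν ∂μ).toReal := by
  have hinner : Measurable fun a => ∫⁻ b, F (a, b) ∂ν := hF.lintegral_prod_right'
  rw [← integral_toReal hinner.aemeasurable (ae_lt_top hinner htot)]
  exact integral_congr_ae <| ae_of_all _ fun a => integral_toReal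
    (hF.comp measurable_prodMk_left).aemeasurable (ae_of_all _ fun b => (hfin _).lt_top)

theorem integral_integral_toReal_volume_chord_pow_three {T : Set ℂ} (hconv : Convex ℝ T)
    (hbdd : Bornology.IsBounded T) :
    ∫ θ in Ioo 0 π, ∫ s, (volume (chord T θ s)).toReal ^ 3 = 3 * (volume T).toReal ^ 2 := by
  have hK : IsCompact (closure T) := hbdd.isCompact_closure
  have hnull : volume (frontier T) = 0 := hconv.addHaar_frontier volume
  have hchord : ∀ θ, ∀ᵐ s, volume (chord T θ s) = volume (chord (closure T) θ s) := fun θ =>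
    (ae_chord_ae_eq (closure_ae_eq_of_null_frontier hnull).symm θ).mono fun _ h => measure_congr h
  have hclosure := lintegral_lintegral_volume_chord_pow_three hK hconv.closure
  calc ∫ θ in Ioo 0 π, ∫ s, (volume (chord T θ s)).toReal ^ 3
      = ∫ θ in Ioo 0 π, ∫ s, (volume (chord (closure T) θ s) ^ 3).toReal :=
        integral_congr_ae <| ae_of_all _ fun θ => integral_congr_ae <|
          (hchord θ).mono fun s h => by simp only [h, ENNReal.toReal_pow]
    _ = (∫⁻ θ in Ioo 0 π, ∫⁻ s, volume (chord (closure T) θ s) ^ 3).toReal :=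
        integral_integral_toReal (F := fun p => volume (chord (closure T) p.1 p.2) ^ 3)
          ((measurable_volume_chord hK.measurableSet).pow_const 3)
          (fun p => ENNReal.pow_ne_top (isCompact_chord hK p.1 p.2).measure_ne_top)
          (hclosure ▸ ENNReal.mul_ne_top (by simp) (ENNReal.pow_ne_top hK.measure_ne_top))
    _ = 3 * (volume T).toReal ^ 2 := by
        rw [hclosure, measure_closure_of_null_frontier hnull, ENNReal.toReal_mul,
          ENNReal.toReal_pow]
        rfl

lemma orthonormalBasisOneI_repr_lineParam (θ s t : ℝ) :
    Complex.orthonormalBasisOneI.repr (lineParam θ s t) =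
      pt (s * Real.cos θ - t * Real.sin θ) (s * Real.sin θ + t * Real.cos θ) := by
  change pt (lineParam θ s t).re (lineParam θ s t).im = _
  congr 1 <;> simp [lineParam, Complex.exp_ofReal_mul_I_re, Complex.exp_ofReal_mul_I_im]

theorem stmt11_general (S : Set (EuclideanSpace ℝ (Fin 2)))
    (hconv : Convex ℝ S) (hbdd : Bornology.IsBounded S) :
    ∫ θ in Ioo (0:ℝ) π, ∫ s : ℝ, (chordLen S s θ) ^ 3 =
      3 * ((volume S).toReal) ^ 2 := by
  set e := Complex.orthonormalBasisOneI.repr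
  have hchord : ∀ s θ, chordLen S s θ = (volume (chord (e ⁻¹' S) θ s)).toReal := fun s θ => by
    simp only [chordLen, chord, mem_preimage, e, orthonormalBasisOneI_repr_lineParam]
  have hvol : volume (e ⁻¹' S) = volume S :=
    e.measurePreserving.measure_preimage_equiv (f := e.toMeasurableEquiv) S
  simp_rw [hchord, ← hvol]
  exact integral_integral_toReal_volume_chord_pow_three (hconv.linear_preimage e.toLinearMap)
    (e.antilipschitz.isBounded_preimage hbdd)

/-- Crofton's formula: for a bounded convex S with nonempty interior,
∫₀^π ∫ l(s,θ)³ ds dθ = 3|S|². -/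
theorem stmt11 (S : Set (EuclideanSpace ℝ (Fin 2)))
    (hconv : Convex ℝ S) (hbdd : Bornology.IsBounded S)
    (hint : (interior S).Nonempty) :
    ∫ θ in Ioo (0:ℝ) π, ∫ s : ℝ, (chordLen S s θ) ^ 3 =
      3 * ((volume S).toReal) ^ 2 :=
  stmt11_general S hconv hbdd
end

section
/- Let S ⊆ ℝ² be measurable with 0 < |S| < ∞, let μ be the uniform probability measure on S, and let X, Y be independent random points distributed according to μ. Let l(X,Y) denote the length of the intersection with S of the infinite straight line through X and Y. Then E(l(X,Y)/|X−Y|) ≤ 3. -/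
open MeasureTheory Real Set
open scoped ENNReal

/-- The length of the intersection of S with the infinite line through x and y. -/
noncomputable def lineLen (S : Set (EuclideanSpace ℝ (Fin 2)))
    (x y : EuclideanSpace ℝ (Fin 2)) : ℝ :=
  ‖y - x‖ * (volume {t : ℝ | x + t • (y - x) ∈ S}).toReal

/-!
Let `F(t)` be the `ν ⊗ ν`-mass of the pairs `(x, y)` with `(1 - t) x + t y ∈ S`, where `ν` is
Lebesgue measure restricted to `S`. Since `l(x, y) / |x - y|` is the length of the set of
parameters `t` with `x + t (y - x) ∈ S`, Tonelli turns the expectation into `|S|⁻² ∫ F`.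
Clearly `F ≤ |S|²`. Exchanging `x` and `y` gives `F(1 - t) = F(t)`, and the homothety of ratio
`u` centred at `x` gives `F(1/u) = |u|ⁿ F(u)` in dimension `n`. Substituting `t = 1/u`, the
integral of `F` over `(1, ∞)` becomes `∫₀¹ uⁿ⁻² F(u) du ≤ |S|²` when `n ≥ 2`, and by the symmetry
so does the integral over `(-∞, 0)`; together with `[0, 1]` this gives `∫ F ≤ 3 |S|²`.
-/

open Measure AffineMap Module

lemma image_homothety_preimage_inter {k P : Type*} [Field k] [AddCommGroup P] [Module k P]
    (x : P) {u : k} (hu : u ≠ 0) (S : Set P) :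
    homothety x u '' (homothety x u ⁻¹' S ∩ S) = homothety x u⁻¹ ⁻¹' S ∩ S := by
  have hinv : ∀ r s : k, r * s = 1 → Function.LeftInverse (homothety x r) (homothety x s) :=
    fun r s h p => by rw [← homothety_mul_apply, h, homothety_one, id_apply]
  rw [image_eq_preimage_of_inverse (hinv _ _ (inv_mul_cancel₀ hu))
    (hinv _ _ (mul_inv_cancel₀ hu)), preimage_inter, ← preimage_comp,
    (hinv _ _ (mul_inv_cancel₀ hu)).comp_eq_id, preimage_id, inter_comm]

section LineMapMass

variable {E : Type*} [AddCommGroup E] [Module ℝ E] [MeasurableSpace E]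

noncomputable def lineMapMass (ν : Measure E) (S : Set E) (t : ℝ) : ℝ≥0∞ :=
  ν.prod ν {p | lineMap p.1 p.2 t ∈ S}

lemma lineMapMass_le (ν : Measure E) [SFinite ν] (S : Set E) (t : ℝ) :
    lineMapMass ν S t ≤ ν univ * ν univ := by
  rw [← prod_prod, univ_prod_univ]
  exact measure_mono (subset_univ _)

lemma lineMapMass_one_sub (ν : Measure E) [SFinite ν] (S : Set E) (t : ℝ) :
    lineMapMass ν S (1 - t) = lineMapMass ν S t := by
  simp only [lineMapMass, lineMap_apply_one_sub]
  exact (measurePreserving_swap (μ := ν) (ν := ν)).measure_preimage_emb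
    MeasurableEquiv.prodComm.measurableEmbedding {p : E × E | lineMap p.1 p.2 t ∈ S}

lemma setLIntegral_Iio_zero_lineMapMass_eq_Ioi_one (ν : Measure E) [SFinite ν] (S : Set E) :
    ∫⁻ t in Iio 0, lineMapMass ν S t = ∫⁻ t in Ioi 1, lineMapMass ν S t := by
  have h := (measurePreserving_sub_left volume (1 : ℝ)).setLIntegral_comp_preimage_emb
    (MeasurableEquiv.subLeft (1 : ℝ)).measurableEmbedding (lineMapMass ν S) (Iio 0)
  rw [← h, preimage_const_sub_Iio, sub_zero]
  simp only [lineMapMass_one_sub]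

end LineMapMass

section Normed

variable {E : Type*} [NormedAddCommGroup E] [NormedSpace ℝ E] [MeasurableSpace E] [BorelSpace E]
  [SecondCountableTopology E] {S : Set E}

lemma measurableSet_lineMap_mem (hS : MeasurableSet S) (t : ℝ) :
    MeasurableSet {p : E × E | lineMap p.1 p.2 t ∈ S} :=
  hS.preimage (by simp only [lineMap_apply_module]; fun_prop)

lemma lintegral_volume_lineMap_mem_comm (ν : Measure (E × E)) [SFinite ν]
    (hS : MeasurableSet S) :
    ∫⁻ p, volume {t : ℝ | lineMap p.1 p.2 t ∈ S} ∂ν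
      = ∫⁻ t : ℝ, ν {p | lineMap p.1 p.2 t ∈ S} := by
  have hW : MeasurableSet {q : (E × E) × ℝ | lineMap q.1.1 q.1.2 q.2 ∈ S} :=
    hS.preimage (by simp only [lineMap_apply_module]; fun_prop)
  exact (Measure.prod_apply hW).symm.trans (prod_apply_symm hW)

lemma lineMapMass_restrict_eq_setLIntegral (μ : Measure E) [SFinite μ] (hS : MeasurableSet S)
    (t : ℝ) :
    lineMapMass (μ.restrict S) S t = ∫⁻ x in S, μ (homothety x t ⁻¹' S ∩ S) ∂μ := by
  rw [lineMapMass, Measure.prod_apply (measurableSet_lineMap_mem hS t)]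
  refine lintegral_congr fun x => ?_
  rw [restrict_apply' hS]
  rfl

variable [FiniteDimensional ℝ E]

lemma lineMapMass_restrict_inv (μ : Measure E) [μ.IsAddHaarMeasure] (hS : MeasurableSet S)
    {u : ℝ} (hu : u ≠ 0) :
    lineMapMass (μ.restrict S) S u⁻¹
      = ENNReal.ofReal |u ^ finrank ℝ E| * lineMapMass (μ.restrict S) S u := by
  rw [lineMapMass_restrict_eq_setLIntegral μ hS, lineMapMass_restrict_eq_setLIntegral μ hS,
    ← lintegral_const_mul' _ _ ENNReal.ofReal_ne_top]
  refine lintegral_congr fun x => ?_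
  rw [← addHaar_image_homothety, image_homothety_preimage_inter _ hu]

lemma setLIntegral_Ioi_one_lineMapMass_le (μ : Measure E) [μ.IsAddHaarMeasure]
    (hE : 2 ≤ finrank ℝ E) (hS : MeasurableSet S) :
    ∫⁻ t in Ioi 1, lineMapMass (μ.restrict S) S t
      ≤ ∫⁻ u in Ioo 0 1, lineMapMass (μ.restrict S) S u := by
  have himage : Inv.inv '' Ioo (0 : ℝ) 1 = Ioi 1 := by
    rw [image_inv_eq_inv, inv_Ioo_0_left one_pos, inv_one]
  rw [← himage, lintegral_image_eq_lintegral_abs_deriv_mul measurableSet_Ioo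
    (fun u hu => (hasDerivAt_inv hu.1.ne').hasDerivWithinAt) inv_injective.injOn]
  refine setLIntegral_mono' measurableSet_Ioo fun u ⟨hu0, hu1⟩ => ?_
  rw [lineMapMass_restrict_inv μ hS hu0.ne', ← mul_assoc, ← ENNReal.ofReal_mul (abs_nonneg _),
    ← abs_mul]
  refine mul_le_of_le_one_left (by positivity) (ENNReal.ofReal_le_one.2 ?_)
  obtain ⟨k, hk⟩ := Nat.exists_eq_add_of_le hE
  rw [hk, pow_add, ← mul_assoc, neg_mul, inv_mul_cancel₀ (by positivity), neg_one_mul, abs_neg,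
    abs_of_nonneg (by positivity)]
  exact pow_le_one₀ hu0.le hu1.le

lemma lintegral_lineMapMass_restrict_le (μ : Measure E) [μ.IsAddHaarMeasure]
    (hE : 2 ≤ finrank ℝ E) (hS : MeasurableSet S) :
    ∫⁻ t, lineMapMass (μ.restrict S) S t ≤ 3 * (μ S * μ S) := by
  set F := lineMapMass (μ.restrict S) S
  have hbound (s : Set ℝ) : ∫⁻ t in s, F t ≤ μ S * μ S * volume s :=
    (lintegral_mono fun t => lineMapMass_le _ S t).trans_eq
      (by rw [setLIntegral_const, restrict_apply_univ])
  calc ∫⁻ t, F t = ∫⁻ t in Iio 0 ∪ (Icc 0 1 ∪ Ioi 1), F t := by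
        rw [Icc_union_Ioi_eq_Ici zero_le_one, Iio_union_Ici, restrict_univ]
    _ ≤ (∫⁻ t in Iio 0, F t) + ((∫⁻ t in Icc 0 1, F t) + ∫⁻ t in Ioi 1, F t) :=
        (lintegral_union_le _ _ _).trans (add_le_add_right (lintegral_union_le _ _ _) _)
    _ = (∫⁻ t in Icc 0 1, F t) + 2 * ∫⁻ t in Ioi 1, F t := by
        rw [show ∫⁻ t in Iio 0, F t = ∫⁻ t in Ioi 1, F t from
          setLIntegral_Iio_zero_lineMapMass_eq_Ioi_one _ S]
        ring
    _ ≤ μ S * μ S * volume (Icc (0 : ℝ) 1) + 2 * (μ S * μ S * volume (Ioo (0 : ℝ) 1)) :=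
        add_le_add (hbound _)
          (mul_le_mul_right ((setLIntegral_Ioi_one_lineMapMass_le μ hE hS).trans (hbound _)) 2)
    _ = 3 * (μ S * μ S) := by simp [Real.volume_Icc, Real.volume_Ioo]; ring

end Normed

lemma lineLen_div_norm_le (S : Set (EuclideanSpace ℝ (Fin 2)))
    (x y : EuclideanSpace ℝ (Fin 2)) :
    lineLen S x y / ‖x - y‖ ≤ (volume {t : ℝ | lineMap x y t ∈ S}).toReal := by
  rcases eq_or_ne x y with rfl | hxy
  · simp [lineLen]
  · have hset : {t : ℝ | x + t • (y - x) ∈ S} = {t : ℝ | lineMap x y t ∈ S} := by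
      simp only [lineMap_apply_module', add_comm x]
    rw [lineLen, hset, norm_sub_rev y x,
      mul_div_cancel_left₀ _ (norm_ne_zero_iff.2 (sub_ne_zero.2 hxy))]

/-- for X, Y i.i.d. uniform on a measurable S with 0 < |S| < ∞,
E(l(X,Y)/|X−Y|) ≤ 3. -/
theorem stmt15 (S : Set (EuclideanSpace ℝ (Fin 2))) (hS : MeasurableSet S)
    (h0 : 0 < volume S) (h1 : volume S < ∞)
    (μ : Measure (EuclideanSpace ℝ (Fin 2)))
    (hμ : μ = (volume S)⁻¹ • volume.restrict S) :
    ∫⁻ p, ENNReal.ofReal (lineLen S p.1 p.2 / ‖p.1 - p.2‖) ∂(μ.prod μ) ≤ 3 := by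
  set c := volume S
  have hprod : μ.prod μ = (c⁻¹ * c⁻¹) • (volume.restrict S).prod (volume.restrict S) := by
    rw [hμ, prod_smul_left, prod_smul_right, smul_smul]
  calc ∫⁻ p, ENNReal.ofReal (lineLen S p.1 p.2 / ‖p.1 - p.2‖) ∂(μ.prod μ)
      ≤ ∫⁻ p, volume {t : ℝ | lineMap p.1 p.2 t ∈ S} ∂(μ.prod μ) :=
        lintegral_mono fun p => ENNReal.ofReal_le_of_le_toReal (lineLen_div_norm_le S p.1 p.2)
    _ = c⁻¹ * c⁻¹ * ∫⁻ t, lineMapMass (volume.restrict S) S t := by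
        rw [hprod, lintegral_volume_lineMap_mem_comm _ hS, ← lintegral_const_mul' _ _
          (ENNReal.mul_ne_top (ENNReal.inv_ne_top.2 h0.ne') (ENNReal.inv_ne_top.2 h0.ne'))]
        rfl
    _ ≤ c⁻¹ * c⁻¹ * (3 * (c * c)) := by
        gcongr
        exact lintegral_lineMapMass_restrict_le volume (by simp) hS
    _ = 3 := by
        rw [show c⁻¹ * c⁻¹ * (3 * (c * c)) = 3 * ((c⁻¹ * c) * (c⁻¹ * c)) by ring,
          ENNReal.inv_mul_cancel h0.ne' h1.ne, mul_one, mul_one]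
end
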